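/- Let p be a prime, k a positive integer, w a complex number with |w| ≤ 1, and let α_1, …, α_{2k}, β_1, …, β_{2k} be complex numbers with |Re α_j| < 1/2 and |Re β_j| < 1/2 for all j. Then the absolutely convergent sum, over all tuples (e_1, …, e_{2k}, e'_1, …, e'_{2k}) of non-negative integers satisfying ∑_{j=1}^k (e_j + e'_j) = ∑_{j=1}^k (e_{j+k} + e'_{j+k}), of w^{e'_1 + ⋯ + e'_k} · conj(w)^{e'_{k+1} + ⋯ + e'_{2k}} · p^{−∑_{j=1}^k e_j(1/2 + α_j) − ∑_{j=1}^k e_{j+k}(1/2 − α_{j+k}) − ∑_{j=1}^k e'_j(1/2 + β_j) − ∑_{j=1}^k e'_{j+k}(1/2 − β_{j+k})}, equals ∫_0^1 ∏_{j=1}^k (1 − e(θ) p^{-1/2 − α_j})^{-1} (1 − e(−θ) p^{-1/2 + α_{j+k}})^{-1} (1 − w e(θ) p^{-1/2 − β_j})^{-1} (1 − conj(w) e(−θ) p^{-1/2 + β_{j+k}})^{-1} dθ, where e(θ) = e^{2πiθ}. -/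

import Mathlib

/-!
Expand each factor `(1 - c e(±θ))⁻¹` of the integrand as a geometric series: every ratio `c` has
modulus `< 1` because `Re (1/2 ± α) > 0` and `|w| ≤ 1`. The product of the `4k` series is the
absolutely convergent multiple series `∑_q ∏ c_i ^ q_i e(θ ∑ ±q_i)`, which may be integrated term
by term over `[0, 1]`. Orthogonality of the characters `e(mθ)` keeps exactly the terms of total
frequency zero, and that is the balance condition on the exponents.
-/

open Complex Real Filter Finset MeasureTheory Topology

section GeometricProduct

variable {ι : Type*} [Fintype ι]

theorem tendsto_piFinset_range_atTop [DecidableEq ι] :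
    Tendsto (fun N : ℕ => Fintype.piFinset fun _ : ι => range N) atTop atTop := by
  refine tendsto_atTop_finset_of_monotone
    (fun M N hMN => Fintype.piFinset_subset _ _ fun _ => range_mono hMN)
    (fun q => ⟨∑ i, q i + 1, Fintype.mem_piFinset.2 fun i => ?_⟩)
  have := single_le_sum (fun j _ => Nat.zero_le (q j)) (mem_univ i)
  rw [mem_range]
  omega

theorem summable_prod_pow_of_nonneg_of_lt_one {a : ι → ℝ} (h0 : ∀ i, 0 ≤ a i)
    (h1 : ∀ i, a i < 1) : Summable fun q : ι → ℕ => ∏ i, a i ^ q i := by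
  classical
  have hterm (q : ι → ℕ) : 0 ≤ ∏ i, a i ^ q i := prod_nonneg fun i _ => pow_nonneg (h0 i) _
  refine summable_of_sum_le (c := ∏ i, (1 - a i)⁻¹) hterm fun T => ?_
  obtain ⟨N, hN⟩ := (tendsto_piFinset_range_atTop.eventually (eventually_ge_atTop T)).exists
  calc ∑ q ∈ T, ∏ i, a i ^ q i
      ≤ ∑ q ∈ Fintype.piFinset fun _ => range N, ∏ i, a i ^ q i :=
        sum_le_sum_of_subset_of_nonneg hN fun q _ _ => hterm q
    _ = ∏ i, ∑ n ∈ range N, a i ^ n := (prod_univ_sum _ _).symm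
    _ ≤ ∏ i, (1 - a i)⁻¹ :=
        prod_le_prod (fun i _ => sum_nonneg fun n _ => pow_nonneg (h0 i) n) fun i _ =>
          sum_le_hasSum _ (fun n _ => pow_nonneg (h0 i) n)
            (hasSum_geometric_of_lt_one (h0 i) (h1 i))

theorem hasSum_prod_pow_of_norm_lt_one {𝕜 : Type*} [NormedField 𝕜] [CompleteSpace 𝕜]
    {c : ι → 𝕜} (hc : ∀ i, ‖c i‖ < 1) :
    HasSum (fun q : ι → ℕ => ∏ i, c i ^ q i) (∏ i, (1 - c i)⁻¹) := by
  classical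
  have hs : Summable fun q : ι → ℕ => ∏ i, c i ^ q i := .of_norm <| by
    simpa only [norm_prod, norm_pow] using
      summable_prod_pow_of_nonneg_of_lt_one (fun i => norm_nonneg (c i)) hc
  have hboxes := hs.hasSum.comp tendsto_piFinset_range_atTop
  have hprod : Tendsto (fun N => ∏ i, ∑ n ∈ range N, c i ^ n) atTop (𝓝 (∏ i, (1 - c i)⁻¹)) :=
    tendsto_finsetProd _ fun i _ => (hasSum_geometric_of_norm_lt_one (hc i)).tendsto_sum_nat
  simp only [prod_univ_sum] at hprod
  exact tendsto_nhds_unique hboxes hprod ▸ hs.hasSum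

end GeometricProduct

section ConstantTerm

theorem norm_exp_two_pi_I_mul_int (θ : ℝ) (m : ℤ) : ‖exp (2 * π * I * θ * m)‖ = 1 := by
  rw [show 2 * π * I * θ * m = ((2 * π * θ * m : ℝ) : ℂ) * I by push_cast; ring]
  exact norm_exp_ofReal_mul_I _

theorem integral_exp_two_pi_I_mul_int (m : ℤ) :
    ∫ θ in (0 : ℝ)..1, exp (2 * π * I * θ * m) = if m = 0 then 1 else 0 := by
  split_ifs with hm
  · simp [hm]
  have hc : 2 * π * I * m ≠ 0 := by simp [pi_ne_zero, I_ne_zero, hm]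
  simp_rw [fun θ : ℝ => show 2 * π * I * θ * m = 2 * π * I * m * θ by ring]
  rw [integral_exp_mul_complex hc, ofReal_one, ofReal_zero, mul_one, mul_zero, Complex.exp_zero,
    show 2 * π * I * m = m * (2 * π * I) by ring, exp_int_mul_two_pi_mul_I, sub_self, zero_div]

variable {ι : Type*} [Fintype ι]

theorem prod_mul_exp_mul_int_pow (c : ι → ℂ) (a : ℂ) (ε : ι → ℤ) (q : ι → ℕ) :
    ∏ i, (c i * exp (a * ε i)) ^ q i = (∏ i, c i ^ q i) * exp (a * ↑(∑ i, ε i * (q i : ℤ))) := by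
  simp only [mul_pow, prod_mul_distrib, ← Complex.exp_nat_mul, ← Complex.exp_sum]
  push_cast
  rw [mul_sum]
  exact congrArg _ (congrArg Complex.exp (sum_congr rfl fun i _ => by ring))

theorem hasSum_prod_pow_integral_prod_inv_one_sub {c : ι → ℂ} (hc : ∀ i, ‖c i‖ < 1)
    (ε : ι → ℤ) :
    HasSum (fun q : {q : ι → ℕ // ∑ i, ε i * (q i : ℤ) = 0} => ∏ i, c i ^ q.1 i)
      (∫ θ in (0 : ℝ)..1, ∏ i, (1 - c i * exp (2 * π * I * θ * ε i))⁻¹) := by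
  set F : (ι → ℕ) → ℝ → ℂ := fun q θ =>
    (∏ i, c i ^ q i) * exp (2 * π * I * θ * ↑(∑ i, ε i * (q i : ℤ))) with hF
  have hF_norm (q : ι → ℕ) (θ : ℝ) : ‖F q θ‖ = ∏ i, ‖c i‖ ^ q i := by
    simp only [hF, norm_mul, norm_exp_two_pi_I_mul_int, mul_one, norm_prod, norm_pow]
  have hF_lim (θ : ℝ) :
      HasSum (fun q => F q θ) (∏ i, (1 - c i * exp (2 * π * I * θ * ε i))⁻¹) := by
    simpa only [prod_mul_exp_mul_int_pow] using hasSum_prod_pow_of_norm_lt_one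
      (c := fun i => c i * exp (2 * π * I * θ * ε i)) fun i => by
      rw [norm_mul, norm_exp_two_pi_I_mul_int, mul_one]
      exact hc i
  have hF_int (q : ι → ℕ) : ∫ θ in (0 : ℝ)..1, F q θ =
      {q : ι → ℕ | ∑ i, ε i * (q i : ℤ) = 0}.indicator (fun q => ∏ i, c i ^ q i) q := by
    simp only [hF, intervalIntegral.integral_const_mul, integral_exp_two_pi_I_mul_int,
      Set.indicator_apply, Set.mem_ofPred_eq, mul_ite, mul_one, mul_zero]
  refine (hasSum_subtype_iff_indicator (f := fun q : ι → ℕ => ∏ i, c i ^ q i)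
    (s := {q : ι → ℕ | ∑ i, ε i * (q i : ℤ) = 0})).2 ?_
  rw [← funext hF_int]
  exact intervalIntegral.hasSum_integral_of_dominated_convergence (fun q _ => ∏ i, ‖c i‖ ^ q i)
    (fun q => (by fun_prop : Continuous (F q)).aestronglyMeasurable)
    (fun q => ae_of_all _ fun θ _ => (hF_norm q θ).le)
    (ae_of_all _ fun _ _ =>
      summable_prod_pow_of_nonneg_of_lt_one (fun i => norm_nonneg (c i)) hc)
    intervalIntegrable_const (ae_of_all _ fun θ _ => hF_lim θ)

end ConstantTerm

theorem cpow_sum_natCast_mul {x : ℂ} (hx : x ≠ 0) {ι : Type*} (s : Finset ι) (n : ι → ℕ)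
    (u : ι → ℂ) : x ^ (∑ j ∈ s, (n j : ℂ) * u j) = ∏ j ∈ s, (x ^ u j) ^ n j := by
  induction s using Finset.cons_induction with
  | empty => simp
  | cons a s ha ih => rw [sum_cons, prod_cons, cpow_add _ _ hx, ih, cpow_nat_mul]

section LocalFactor

variable {k : ℕ}

/-- `(e, f, e', f')` stands for `(e_1..e_k, e_{k+1}..e_{2k}, e'_1..e'_k, e'_{k+1}..e'_{2k})`. -/
abbrev ExponentTuple (k : ℕ) : Type := (Fin k → ℕ) × (Fin k → ℕ) × (Fin k → ℕ) × (Fin k → ℕ)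

def ExponentTuple.IsBalanced (t : ExponentTuple k) : Prop :=
  ∑ j, (t.1 j + t.2.2.1 j) = ∑ j, (t.2.1 j + t.2.2.2 j)

noncomputable def localTerm (p : ℕ) (w : ℂ) (αp αm βp βm : Fin k → ℂ) (t : ExponentTuple k) : ℂ :=
  w ^ (∑ j, t.2.2.1 j) * (starRingEnd ℂ) w ^ (∑ j, t.2.2.2 j) *
    (p : ℂ) ^ (-(∑ j, (t.1 j : ℂ) * (1 / 2 + αp j) +
      ∑ j, (t.2.1 j : ℂ) * (1 / 2 - αm j) +
      ∑ j, (t.2.2.1 j : ℂ) * (1 / 2 + βp j) +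
      ∑ j, (t.2.2.2 j : ℂ) * (1 / 2 - βm j)))

/-- The `4k` geometric factors of the integrand: the four blocks belong to `αp, αm, βp, βm`. -/
abbrev FactorIndex (k : ℕ) : Type := Fin k ⊕ Fin k ⊕ Fin k ⊕ Fin k

namespace FactorIndex

def frequency : FactorIndex k → ℤ :=
  Sum.elim (fun _ => 1) (Sum.elim (fun _ => -1) (Sum.elim (fun _ => 1) fun _ => -1))

noncomputable def ratio (p : ℕ) (w : ℂ) (αp αm βp βm : Fin k → ℂ) : FactorIndex k → ℂ :=
  Sum.elim (fun j => (p : ℂ) ^ (-(1 / 2 : ℂ) - αp j))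
    (Sum.elim (fun j => (p : ℂ) ^ (-(1 / 2 : ℂ) + αm j))
      (Sum.elim (fun j => w * (p : ℂ) ^ (-(1 / 2 : ℂ) - βp j))
        fun j => (starRingEnd ℂ) w * (p : ℂ) ^ (-(1 / 2 : ℂ) + βm j)))

def exponentEquiv (k : ℕ) : (FactorIndex k → ℕ) ≃ ExponentTuple k :=
  (Equiv.sumArrowEquivProdArrow _ _ ℕ).trans <|
    (Equiv.refl _).prodCongr <| (Equiv.sumArrowEquivProdArrow _ _ ℕ).trans <|
      (Equiv.refl _).prodCongr <| Equiv.sumArrowEquivProdArrow _ _ ℕ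

theorem exponentEquiv_apply (q : FactorIndex k → ℕ) :
    exponentEquiv k q = (fun j => q (.inl j), fun j => q (.inr (.inl j)),
      fun j => q (.inr (.inr (.inl j))), fun j => q (.inr (.inr (.inr j)))) :=
  rfl

theorem sum_frequency_mul_eq_zero_iff (q : FactorIndex k → ℕ) :
    ∑ i, frequency i * (q i : ℤ) = 0 ↔ (exponentEquiv k q).IsBalanced := by
  simp only [exponentEquiv_apply, ExponentTuple.IsBalanced, Fintype.sum_sum_type, frequency,
    Sum.elim_inl, Sum.elim_inr]
  rw [← Nat.cast_inj (R := ℤ)]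
  push_cast
  simp only [sum_add_distrib, neg_one_mul, one_mul, sum_neg_distrib]
  omega

variable {p : ℕ} {w : ℂ} {αp αm βp βm : Fin k → ℂ}

theorem norm_ratio_lt_one (hp : 1 < p) (hw : ‖w‖ ≤ 1)
    (hα : ∀ j, |(αp j).re| < 1 / 2 ∧ |(αm j).re| < 1 / 2)
    (hβ : ∀ j, |(βp j).re| < 1 / 2 ∧ |(βm j).re| < 1 / 2) (i : FactorIndex k) :
    ‖ratio p w αp αm βp βm i‖ < 1 := by
  have hpow {z : ℂ} (hz : z.re < 0) : ‖(p : ℂ) ^ z‖ < 1 := by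
    rw [norm_natCast_cpow_of_pos (by omega)]
    exact Real.rpow_lt_one_of_one_lt_of_neg (by exact_mod_cast hp) hz
  have hmul {u z : ℂ} (hu : ‖u‖ ≤ 1) (hz : z.re < 0) : ‖u * (p : ℂ) ^ z‖ < 1 := by
    rw [norm_mul]
    exact mul_lt_one_of_nonneg_of_lt_one_right hu (norm_nonneg _) (hpow hz)
  have hhalf : (1 / 2 : ℂ).re = 1 / 2 := by norm_num
  rcases i with j | j | j | j <;> simp only [ratio, Sum.elim_inl, Sum.elim_inr]
  · exact hpow (by rw [sub_re, neg_re, hhalf]; linarith [(abs_lt.mp (hα j).1).1])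
  · exact hpow (by rw [add_re, neg_re, hhalf]; linarith [(abs_lt.mp (hα j).2).2])
  · exact hmul hw (by rw [sub_re, neg_re, hhalf]; linarith [(abs_lt.mp (hβ j).1).1])
  · exact hmul (by rwa [RCLike.norm_conj])
      (by rw [add_re, neg_re, hhalf]; linarith [(abs_lt.mp (hβ j).2).2])

theorem localTerm_exponentEquiv (hp : p ≠ 0) (q : FactorIndex k → ℕ) :
    localTerm p w αp αm βp βm (exponentEquiv k q) = ∏ i, ratio p w αp αm βp βm i ^ q i := by
  have hp' : (p : ℂ) ≠ 0 := Nat.cast_ne_zero.mpr hp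
  simp only [exponentEquiv_apply, localTerm, Fintype.prod_sum_type, ratio, Sum.elim_inl,
    Sum.elim_inr, mul_pow, prod_mul_distrib, prod_pow_eq_pow_sum]
  rw [neg_add, neg_add, neg_add]
  -- `neg_add'` also matches `-(a - b)` as `-(a + -b)`, so `neg_sub'` gets a pass of its own
  simp only [← sum_neg_distrib, ← mul_neg, neg_sub']
  simp only [neg_add', sub_neg_eq_add]
  rw [cpow_add _ _ hp', cpow_add _ _ hp', cpow_add _ _ hp', cpow_sum_natCast_mul hp',
    cpow_sum_natCast_mul hp', cpow_sum_natCast_mul hp', cpow_sum_natCast_mul hp']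
  ring

theorem prod_inv_one_sub_ratio_mul_exp (θ : ℝ) :
    ∏ i, (1 - ratio p w αp αm βp βm i * exp (2 * π * I * θ * frequency i))⁻¹ =
      ∏ j : Fin k,
        ((1 - exp (2 * π * I * θ) * (p : ℂ) ^ (-(1 / 2 : ℂ) - αp j))⁻¹ *
          (1 - exp (-(2 * π * I * θ)) * (p : ℂ) ^ (-(1 / 2 : ℂ) + αm j))⁻¹ *
          (1 - w * exp (2 * π * I * θ) * (p : ℂ) ^ (-(1 / 2 : ℂ) - βp j))⁻¹ *
          (1 - (starRingEnd ℂ) w * exp (-(2 * π * I * θ)) *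
            (p : ℂ) ^ (-(1 / 2 : ℂ) + βm j))⁻¹) := by
  simp only [Fintype.prod_sum_type, ratio, frequency, Sum.elim_inl, Sum.elim_inr, Int.cast_one,
    Int.cast_neg, mul_one, mul_neg_one, ← prod_mul_distrib]
  exact prod_congr rfl fun j _ => by ring

end FactorIndex

end LocalFactor

theorem local_factor_integral_representation_general
    (p : ℕ) (hp : p.Prime) (k : ℕ) (w : ℂ) (hw : ‖w‖ ≤ 1)
    (αp αm βp βm : Fin k → ℂ)
    (hα : ∀ j, |(αp j).re| < 1 / 2 ∧ |(αm j).re| < 1 / 2)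
    (hβ : ∀ j, |(βp j).re| < 1 / 2 ∧ |(βm j).re| < 1 / 2) :
    Summable (fun q : {q : (Fin k → ℕ) × (Fin k → ℕ) × (Fin k → ℕ) × (Fin k → ℕ) //
        ∑ j, (q.1 j + q.2.2.1 j) = ∑ j, (q.2.1 j + q.2.2.2 j)} =>
      ‖w ^ (∑ j, q.1.2.2.1 j) * (starRingEnd ℂ) w ^ (∑ j, q.1.2.2.2 j) *
        (p : ℂ) ^ (-(∑ j, (q.1.1 j : ℂ) * (1 / 2 + αp j) +
          ∑ j, (q.1.2.1 j : ℂ) * (1 / 2 - αm j) +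
          ∑ j, (q.1.2.2.1 j : ℂ) * (1 / 2 + βp j) +
          ∑ j, (q.1.2.2.2 j : ℂ) * (1 / 2 - βm j)))‖) ∧
    (∑' q : {q : (Fin k → ℕ) × (Fin k → ℕ) × (Fin k → ℕ) × (Fin k → ℕ) //
        ∑ j, (q.1 j + q.2.2.1 j) = ∑ j, (q.2.1 j + q.2.2.2 j)},
      w ^ (∑ j, q.1.2.2.1 j) * (starRingEnd ℂ) w ^ (∑ j, q.1.2.2.2 j) *
        (p : ℂ) ^ (-(∑ j, (q.1.1 j : ℂ) * (1 / 2 + αp j) +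
          ∑ j, (q.1.2.1 j : ℂ) * (1 / 2 - αm j) +
          ∑ j, (q.1.2.2.1 j : ℂ) * (1 / 2 + βp j) +
          ∑ j, (q.1.2.2.2 j : ℂ) * (1 / 2 - βm j)))) =
      ∫ θ in (0:ℝ)..1, ∏ j : Fin k,
        ((1 - Complex.exp (2 * Real.pi * I * θ) * (p : ℂ) ^ (-(1 / 2 : ℂ) - αp j))⁻¹ *
          (1 - Complex.exp (-(2 * Real.pi * I * θ)) * (p : ℂ) ^ (-(1 / 2 : ℂ) + αm j))⁻¹ *
          (1 - w * Complex.exp (2 * Real.pi * I * θ) * (p : ℂ) ^ (-(1 / 2 : ℂ) - βp j))⁻¹ *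
          (1 - (starRingEnd ℂ) w * Complex.exp (-(2 * Real.pi * I * θ)) *
            (p : ℂ) ^ (-(1 / 2 : ℂ) + βm j))⁻¹) := by
  set c := FactorIndex.ratio p w αp αm βp βm
  have hc : ∀ i, ‖c i‖ < 1 := FactorIndex.norm_ratio_lt_one hp.one_lt hw hα hβ
  let e := (FactorIndex.exponentEquiv k).subtypeEquiv FactorIndex.sum_frequency_mul_eq_zero_iff
  have hterm (q : {q : FactorIndex k → ℕ // ∑ i, FactorIndex.frequency i * (q i : ℤ) = 0}) :
      localTerm p w αp αm βp βm (e q).1 = ∏ i, c i ^ q.1 i :=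
    FactorIndex.localTerm_exponentEquiv hp.ne_zero q.1
  change Summable (fun t : {t : ExponentTuple k // t.IsBalanced} =>
      ‖localTerm p w αp αm βp βm t.1‖) ∧
    ∑' t : {t : ExponentTuple k // t.IsBalanced}, localTerm p w αp αm βp βm t.1 = _
  refine ⟨e.summable_iff.mp ?_, ?_⟩
  · simpa only [Function.comp_def, hterm, norm_prod, norm_pow] using
      (summable_prod_pow_of_nonneg_of_lt_one (fun i => norm_nonneg (c i)) hc).subtype _
  · rw [← e.tsum_eq]
    simp only [hterm, (hasSum_prod_pow_integral_prod_inv_one_sub hc FactorIndex.frequency).tsum_eq]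
    exact intervalIntegral.integral_congr fun θ _ => FactorIndex.prod_inv_one_sub_ratio_mul_exp θ

/-- **Integral representation of the local factor `B_p(α,β)`.**  Let `p` be a prime, `k ≥ 1`,
`|w| ≤ 1`, and shifts `α_1,…,α_{2k}, β_1,…,β_{2k}` with real parts `< 1/2` in modulus;
here `αp j = α_j`, `αm j = α_{k+j}`, `βp j = β_j`, `βm j = β_{k+j}`, and the exponent
tuples are `e = (e_1,…,e_k)`, `f = (e_{k+1},…,e_{2k})`, `e' = (e'_1,…,e'_k)`,
`f' = (e'_{k+1},…,e'_{2k})`.  The sum over all tuples with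
`∑_j (e_j + e'_j) = ∑_j (f_j + f'_j)` of
`w^{∑ e'_j} conj(w)^{∑ f'_j} p^{-∑ e_j(1/2+α_j) - ∑ f_j(1/2-α_{k+j}) - ∑ e'_j(1/2+β_j) - ∑ f'_j(1/2-β_{k+j})}`
converges absolutely and equals
`∫_0^1 ∏_j (1-e(θ)p^{-1/2-α_j})⁻¹(1-e(-θ)p^{-1/2+α_{k+j}})⁻¹(1-we(θ)p^{-1/2-β_j})⁻¹(1-conj(w)e(-θ)p^{-1/2+β_{k+j}})⁻¹ dθ`. -/
theorem local_factor_integral_representation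
    (p : ℕ) (hp : p.Prime) (k : ℕ) (hk : 0 < k) (w : ℂ) (hw : ‖w‖ ≤ 1)
    (αp αm βp βm : Fin k → ℂ)
    (hα : ∀ j, |(αp j).re| < 1 / 2 ∧ |(αm j).re| < 1 / 2)
    (hβ : ∀ j, |(βp j).re| < 1 / 2 ∧ |(βm j).re| < 1 / 2) :
    Summable (fun q : {q : (Fin k → ℕ) × (Fin k → ℕ) × (Fin k → ℕ) × (Fin k → ℕ) //
        ∑ j, (q.1 j + q.2.2.1 j) = ∑ j, (q.2.1 j + q.2.2.2 j)} =>
      ‖w ^ (∑ j, q.1.2.2.1 j) * (starRingEnd ℂ) w ^ (∑ j, q.1.2.2.2 j) *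
        (p : ℂ) ^ (-(∑ j, (q.1.1 j : ℂ) * (1 / 2 + αp j) +
          ∑ j, (q.1.2.1 j : ℂ) * (1 / 2 - αm j) +
          ∑ j, (q.1.2.2.1 j : ℂ) * (1 / 2 + βp j) +
          ∑ j, (q.1.2.2.2 j : ℂ) * (1 / 2 - βm j)))‖) ∧
    (∑' q : {q : (Fin k → ℕ) × (Fin k → ℕ) × (Fin k → ℕ) × (Fin k → ℕ) //
        ∑ j, (q.1 j + q.2.2.1 j) = ∑ j, (q.2.1 j + q.2.2.2 j)},
      w ^ (∑ j, q.1.2.2.1 j) * (starRingEnd ℂ) w ^ (∑ j, q.1.2.2.2 j) *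
        (p : ℂ) ^ (-(∑ j, (q.1.1 j : ℂ) * (1 / 2 + αp j) +
          ∑ j, (q.1.2.1 j : ℂ) * (1 / 2 - αm j) +
          ∑ j, (q.1.2.2.1 j : ℂ) * (1 / 2 + βp j) +
          ∑ j, (q.1.2.2.2 j : ℂ) * (1 / 2 - βm j)))) =
      ∫ θ in (0:ℝ)..1, ∏ j : Fin k,
        ((1 - Complex.exp (2 * Real.pi * I * θ) * (p : ℂ) ^ (-(1 / 2 : ℂ) - αp j))⁻¹ *
          (1 - Complex.exp (-(2 * Real.pi * I * θ)) * (p : ℂ) ^ (-(1 / 2 : ℂ) + αm j))⁻¹ *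
          (1 - w * Complex.exp (2 * Real.pi * I * θ) * (p : ℂ) ^ (-(1 / 2 : ℂ) - βp j))⁻¹ *
          (1 - (starRingEnd ℂ) w * Complex.exp (-(2 * Real.pi * I * θ)) *
            (p : ℂ) ^ (-(1 / 2 : ℂ) + βm j))⁻¹) :=
  local_factor_integral_representation_general p hp k w hw αp αm βp βm hα hβ
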